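/- Let E be a group, let H and K be subgroups of E, let 𝕜 be a field, and let (ρ, V) be a 𝕜-linear representation of H. Let Ind_H^E(V) := { f : E → V | f(h·g) = ρ(h)(f(g)) for all h ∈ H, g ∈ E }, a 𝕜-vector space on which K acts by (k·f)(g) := f(g·k). Choose a set Λ ⊆ E of representatives for the double coset space H\E/K (where H·g·K := {h·g·k : h ∈ H, k ∈ K}). Then the space of K-fixed vectors Ind_H^E(V)^K := { f ∈ Ind_H^E(V) | k·f = f for all k ∈ K } is 𝕜-linearly isomorphic to the direct product, over g ∈ Λ, of the fixed subspaces V^{gKg⁻¹ ∩ H} := { v ∈ V | ρ(x)(v) = v for all x ∈ gKg⁻¹ ∩ H }. -/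
import Mathlib


/-- The induced representation `Ind_H^E(V)` of `ρ : H → GL(V)`, intersected with
the `K`-fixed vectors, realized as a submodule of `E → V`:
functions `f : E → V` with `f(h·g) = ρ(h)(f(g))` for all `h ∈ H, g ∈ E`,
which are moreover fixed under the `K`-action `(k·f)(g) = f(g·k)`. -/
def inducedKFixed {E : Type*} [Group E] (H K : Subgroup E) {𝕜 : Type*} [Field 𝕜]
    {V : Type*} [AddCommGroup V] [Module 𝕜 V] (ρ : Representation 𝕜 H V) :
    Submodule 𝕜 (E → V) where
  carrier := {f | (∀ (h : H) (g : E), f ((h : E) * g) = ρ h (f g)) ∧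
      (∀ (k : K) (g : E), f (g * (k : E)) = f g)}
  add_mem' := by
    intro f g hf hg
    refine ⟨fun h x => ?_, fun k x => ?_⟩
    · simp [hf.1 h x, hg.1 h x]
    · simp [hf.2 k x, hg.2 k x]
  zero_mem' := by
    exact ⟨fun h x => by simp, fun k x => by simp⟩
  smul_mem' := by
    intro c f hf
    refine ⟨fun h x => ?_, fun k x => ?_⟩
    · simp [hf.1 h x]
    · simp [hf.2 k x]

/-- The subspace `V^{gKg⁻¹ ∩ H}` of vectors of the representation `(ρ, V)` of `H`
fixed by every element of `H` lying in the conjugate `gKg⁻¹`. -/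
def conjFixed {E : Type*} [Group E] (H : Subgroup E) {𝕜 : Type*} [Field 𝕜]
    {V : Type*} [AddCommGroup V] [Module 𝕜 V] (ρ : Representation 𝕜 H V)
    (K : Subgroup E) (g : E) : Submodule 𝕜 V where
  carrier := {v | ∀ x : H, (∃ k ∈ K, (x : E) = g * k * g⁻¹) → ρ x v = v}
  add_mem' := by
    intro a b ha hb x hx
    simp [ha x hx, hb x hx]
  zero_mem' := by intro x hx; simp
  smul_mem' := by
    intro c a ha x hx
    simp [ha x hx]

/-- Mackey-type fixed point formula: if `Λ ⊆ E` is a set of representatives for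
the double cosets `H\E/K`, then the `K`-fixed vectors of the induced
representation `Ind_H^E(V)` are linearly isomorphic to the direct product over
`g ∈ Λ` of the fixed subspaces `V^{gKg⁻¹ ∩ H}`. -/
theorem mackey_fixed_points {E : Type*} [Group E] (H K : Subgroup E)
    (𝕜 : Type*) [Field 𝕜] (V : Type*) [AddCommGroup V] [Module 𝕜 V]
    (ρ : Representation 𝕜 H V) (Λ : Set E)
    (hΛ : ∀ g : E, ∃! l, l ∈ Λ ∧ ∃ h ∈ H, ∃ k ∈ K, g = h * l * k) :
    Nonempty ((inducedKFixed H K ρ) ≃ₗ[𝕜] ((l : Λ) → conjFixed H ρ K (l : E))) := by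
  classical
  choose l hl hu using hΛ
  choose hlΛ h hH k hK hdec using hl
  -- well-definedness of the inverse map
  have wd : ∀ (v : (l : Λ) → conjFixed H ρ K (l : E)) (g : E) (h' : H) (l' : Λ)
      (k' : K), g = (h' : E) * (l' : E) * (k' : E) →
      ρ h' ((v l' : V)) = ρ ⟨h g, hH g⟩ ((v ⟨l g, hlΛ g⟩ : V)) := by
    intro v g h' l' k' hg
    have hll : (l' : E) = l g := hu g l' ⟨l'.2, ⟨h', h'.2, k', k'.2, hg⟩⟩
    have hlsub : l' = (⟨l g, hlΛ g⟩ : Λ) := Subtype.ext hll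
    subst hlsub
    have heq : (h' : E) * (l g) * (k' : E) = (h g) * (l g) * (k g) := by
      rw [← hg]; exact hdec g
    have hmemx : (h' : E)⁻¹ * h g ∈ H := H.mul_mem (H.inv_mem h'.2) (hH g)
    have hstep : (h' : E) * ((l g) * ((k' : E) * (k g)⁻¹) * (l g)⁻¹) = h g := by
      calc (h' : E) * ((l g) * ((k' : E) * (k g)⁻¹) * (l g)⁻¹)
          = ((h' : E) * (l g) * (k' : E)) * ((k g)⁻¹ * (l g)⁻¹) := by group
        _ = ((h g) * (l g) * (k g)) * ((k g)⁻¹ * (l g)⁻¹) := by rw [heq]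
        _ = h g := by group
    have hxcoe : (h' : E)⁻¹ * h g = (l g) * ((k' : E) * (k g)⁻¹) * (l g)⁻¹ := by
      rw [← hstep]; group
    have hfix : ρ ⟨(h' : E)⁻¹ * h g, hmemx⟩ ((v ⟨l g, hlΛ g⟩ : V)) = (v ⟨l g, hlΛ g⟩ : V) :=
      (v ⟨l g, hlΛ g⟩).2 _ ⟨(k' : E) * ((k g : E))⁻¹,
        K.mul_mem k'.2 (K.inv_mem (hK g)), hxcoe⟩
    have hmul : (h' * ⟨(h' : E)⁻¹ * h g, hmemx⟩ : H) = ⟨h g, hH g⟩ := by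
      apply Subtype.ext; push_cast; group
    calc ρ h' ((v ⟨l g, hlΛ g⟩ : V))
        = ρ h' (ρ ⟨(h' : E)⁻¹ * h g, hmemx⟩ ((v ⟨l g, hlΛ g⟩ : V))) := by rw [hfix]
      _ = ρ (h' * ⟨(h' : E)⁻¹ * h g, hmemx⟩) ((v ⟨l g, hlΛ g⟩ : V)) := by rw [map_mul]; rfl
      _ = ρ ⟨h g, hH g⟩ ((v ⟨l g, hlΛ g⟩ : V)) := by rw [hmul]
  -- forward map
  let Φ : (inducedKFixed H K ρ) →ₗ[𝕜] ((l : Λ) → conjFixed H ρ K (l : E)) :=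
    { toFun := fun f l' => ⟨f.1 (l' : E), by
        rintro x ⟨κ, hκ, hx⟩
        have h1 : (x : E) * (l' : E) = (l' : E) * κ := by rw [hx]; group
        calc ρ x (f.1 (l' : E)) = f.1 ((x : E) * (l' : E)) := (f.2.1 x (l' : E)).symm
          _ = f.1 ((l' : E) * κ) := by rw [h1]
          _ = f.1 (l' : E) := f.2.2 ⟨κ, hκ⟩ (l' : E)⟩
      map_add' := fun f g => rfl
      map_smul' := fun c f => rfl }
  -- inverse map
  let Ψ : ((l : Λ) → conjFixed H ρ K (l : E)) →ₗ[𝕜] (inducedKFixed H K ρ) :=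
    { toFun := fun v => ⟨fun g => ρ ⟨h g, hH g⟩ ((v ⟨l g, hlΛ g⟩ : V)), by
        constructor
        · intro h₀ g
          have hdec' : (h₀ : E) * g
              = ((h₀ * ⟨h g, hH g⟩ : H) : E) * (⟨l g, hlΛ g⟩ : Λ) * ((⟨k g, hK g⟩ : K) : E) := by
            conv_lhs => rw [hdec g]
            push_cast
            group
          have hwd := wd v ((h₀ : E) * g) (h₀ * ⟨h g, hH g⟩) ⟨l g, hlΛ g⟩ ⟨k g, hK g⟩ hdec'
          dsimp only
          rw [← hwd, map_mul]; rfl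
        · intro k₀ g
          have hdec' : g * (k₀ : E)
              = ((⟨h g, hH g⟩ : H) : E) * (⟨l g, hlΛ g⟩ : Λ) * (((⟨k g, hK g⟩ : K) * k₀ : K) : E) := by
            conv_lhs => rw [hdec g]
            push_cast
            group
          exact (wd v (g * (k₀ : E)) ⟨h g, hH g⟩ ⟨l g, hlΛ g⟩ (⟨k g, hK g⟩ * k₀) hdec').symm⟩
      map_add' := fun v w => by
        apply Subtype.ext; funext g; simp
      map_smul' := fun c v => by
        apply Subtype.ext; funext g; simp }
  refine ⟨LinearEquiv.ofLinear Φ Ψ ?_ ?_⟩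
  · apply LinearMap.ext; intro v
    funext l'
    apply Subtype.ext
    have hd : (l' : E) = ((1 : H) : E) * (l' : E) * ((1 : K) : E) := by simp
    have hwd := wd v (l' : E) 1 l' 1 hd
    show (ρ ⟨h (l' : E), hH _⟩) ((v ⟨l (l' : E), hlΛ _⟩ : V)) = (v l' : V)
    rw [← hwd]
    simp
  · apply LinearMap.ext; intro f
    apply Subtype.ext
    funext g
    show ρ ⟨h g, hH g⟩ (f.1 (l g)) = f.1 g
    calc ρ ⟨h g, hH g⟩ (f.1 (l g))
        = f.1 ((h g) * (l g)) := (f.2.1 ⟨h g, hH g⟩ (l g)).symm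
      _ = f.1 ((h g) * (l g) * (k g)) := (f.2.2 ⟨k g, hK g⟩ ((h g) * (l g))).symm
      _ = f.1 g := by rw [← hdec g]
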